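/- arXiv:1409.0285 — 3 statements merged into one kernel-verified Lean document; each statement's English description precedes it below -/
import Mathlib

section
/- For every real number t ≥ 0, we have ln(1+t) ≥ t/(1+t) + (t²/(2(1+t)²))·(1 + (2/3)·ln(1+t)). -/
/-!
Let `g(t)` be the left-hand side minus the right-hand side. Then `g(0) = 0` and
`g'(t) = 2t (t - log(1 + t)) / (3 (1 + t)³)`, which has the sign of `t` because
`log(1 + t) ≤ t`. So `g` attains its minimum over `(-1, ∞)` at `0`.
-/

open Real Set

noncomputable def logOneAddGap (t : ℝ) : ℝ :=
  log (1 + t) - (t / (1 + t) + t ^ 2 / (2 * (1 + t) ^ 2) * (1 + 2 / 3 * log (1 + t)))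

lemma logOneAddGap_zero : logOneAddGap 0 = 0 := by
  simp [logOneAddGap]

noncomputable def logOneAddGapDeriv (x : ℝ) : ℝ :=
  2 * x * (x - log (1 + x)) / (3 * (1 + x) ^ 3)

lemma hasDerivAt_logOneAddGap {x : ℝ} (hx : 0 < 1 + x) :
    HasDerivAt logOneAddGap (logOneAddGapDeriv x) x := by
  have hx₀ : 1 + x ≠ 0 := hx.ne'
  have hlog : HasDerivAt (fun t ↦ log (1 + t)) (1 / (1 + x)) x := by
    simpa using ((hasDerivAt_id x).const_add 1).log hx₀
  have hquot := (hasDerivAt_id' x).fun_div ((hasDerivAt_id' x).const_add 1) hx₀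
  have hsq := (hasDerivAt_pow 2 x).fun_div
    ((((hasDerivAt_id' x).const_add 1).fun_pow 2).const_mul 2) (by positivity)
  refine (hlog.sub (hquot.add (hsq.mul ((hlog.const_mul (2 / 3)).const_add 1)))).congr_deriv ?_
  rw [logOneAddGapDeriv]
  field_simp
  ring

lemma continuousOn_logOneAddGap : ContinuousOn logOneAddGap (Ioi (-1)) := fun x hx ↦
  (hasDerivAt_logOneAddGap (by simp at hx; linarith)).continuousAt.continuousWithinAt

lemma sub_log_one_add_nonneg {x : ℝ} (hx : -1 < x) : 0 ≤ x - log (1 + x) := by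
  linarith [log_le_sub_one_of_pos (show 0 < 1 + x by linarith)]

lemma logOneAddGapDeriv_nonneg {x : ℝ} (hx : 0 ≤ x) : 0 ≤ logOneAddGapDeriv x := by
  have := sub_log_one_add_nonneg (by linarith : -1 < x)
  unfold logOneAddGapDeriv
  positivity

lemma logOneAddGapDeriv_nonpos {x : ℝ} (hx : -1 < x) (hx' : x ≤ 0) :
    logOneAddGapDeriv x ≤ 0 := by
  have : 0 < 1 + x := by linarith
  exact div_nonpos_of_nonpos_of_nonneg
    (mul_nonpos_of_nonpos_of_nonneg (by linarith) (sub_log_one_add_nonneg hx)) (by positivity)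

lemma monotoneOn_logOneAddGap : MonotoneOn logOneAddGap (Ici 0) := by
  refine monotoneOn_of_hasDerivWithinAt_nonneg (f' := logOneAddGapDeriv) (convex_Ici 0)
    (continuousOn_logOneAddGap.mono (Ici_subset_Ioi.2 (by norm_num))) (fun x hx ↦ ?_)
    (fun x hx ↦ ?_) <;> rw [interior_Ici, mem_Ioi] at hx
  · exact (hasDerivAt_logOneAddGap (by linarith)).hasDerivWithinAt
  · exact logOneAddGapDeriv_nonneg hx.le

lemma antitoneOn_logOneAddGap : AntitoneOn logOneAddGap (Ioc (-1) 0) := by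
  refine antitoneOn_of_hasDerivWithinAt_nonpos (f' := logOneAddGapDeriv) (convex_Ioc (-1) 0)
    (continuousOn_logOneAddGap.mono Ioc_subset_Ioi_self) (fun x hx ↦ ?_)
    (fun x hx ↦ ?_) <;> rw [interior_Ioc, mem_Ioo] at hx
  · exact (hasDerivAt_logOneAddGap (by linarith)).hasDerivWithinAt
  · exact logOneAddGapDeriv_nonpos hx.1 hx.2.le

lemma logOneAddGap_nonneg {t : ℝ} (ht : -1 < t) : 0 ≤ logOneAddGap t := by
  rw [← logOneAddGap_zero]
  rcases le_total 0 t with h | h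
  · exact monotoneOn_logOneAddGap self_mem_Ici h h
  · exact antitoneOn_logOneAddGap ⟨ht, h⟩ ⟨by norm_num, le_rfl⟩ h

theorem log_one_add_lower_bound (t : ℝ) (ht : 0 ≤ t) :
    Real.log (1 + t) ≥ t / (1 + t) + (t ^ 2 / (2 * (1 + t) ^ 2)) * (1 + (2 / 3) * Real.log (1 + t)) := by
  have h := logOneAddGap_nonneg (by linarith : -1 < t)
  rw [logOneAddGap] at h
  linarith
end

section
/- For all real numbers x and y with y > 0 and x ≤ y, and any t > 0, one has e^{tx} ≤ 1 + t·x + ((e^{ty} − 1 − t·y)/y²)·x². -/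
/-!
With `h u = exp u - 1 - u`, `a = t * x ≤ b = t * y` and `0 < b`, clearing denominators turns the
bound into `b ^ 2 * h a ≤ a ^ 2 * h b`. If `a ≤ 0`, both sides are compared with `a ^ 2 * b ^ 2 / 2`,
since `h a ≤ a ^ 2 / 2 ≤ h b`; if `0 ≤ a ≤ b`, the power series `h u = ∑ u ^ (n + 2) / (n + 2)!`
are compared term by term.
-/

open Real Nat

namespace Real

lemma exp_le_one_add_add_sq_div_two_of_nonpos {x : ℝ} (hx : x ≤ 0) :
    exp x ≤ 1 + x + x ^ 2 / 2 := by
  set f : ℝ → ℝ := fun v => 1 + v + v ^ 2 / 2 - exp v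
  have hf (u : ℝ) : HasDerivAt f (1 + u - exp u) u :=
    ((((hasDerivAt_id u).const_add 1).add ((hasDerivAt_pow 2 u).div_const 2)).sub
      (hasDerivAt_exp u)).congr_deriv (by norm_num)
  have hf_anti : Antitone f := antitone_of_deriv_nonpos (fun u => (hf u).differentiableAt)
    fun u => by rw [(hf u).deriv]; linarith [add_one_le_exp u]
  have := hf_anti hx
  simp only [f, exp_zero] at this
  linarith

lemma hasSum_pow_add_two_div_factorial (x : ℝ) :
    HasSum (fun n : ℕ => x ^ (n + 2) / (n + 2)!) (exp x - 1 - x) := by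
  have h := NormedSpace.expSeries_div_hasSum_exp x
  rw [← exp_eq_exp_ℝ] at h
  have h2 := (hasSum_nat_add_iff' (f := fun n : ℕ => x ^ n / (n ! : ℝ)) 2).2 h
  simpa [Finset.sum_range_succ, sub_sub] using h2

variable {a b : ℝ}

lemma sq_mul_exp_sub_one_sub_le_of_nonpos (ha : a ≤ 0) (hb : 0 ≤ b) :
    b ^ 2 * (exp a - 1 - a) ≤ a ^ 2 * (exp b - 1 - b) :=
  calc b ^ 2 * (exp a - 1 - a) ≤ b ^ 2 * (a ^ 2 / 2) := by
        gcongr; linarith [exp_le_one_add_add_sq_div_two_of_nonpos ha]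
    _ = a ^ 2 * (b ^ 2 / 2) := by ring
    _ ≤ a ^ 2 * (exp b - 1 - b) := by
        gcongr; linarith [quadratic_le_exp_of_nonneg hb]

lemma sq_mul_exp_sub_one_sub_le_of_nonneg (ha : 0 ≤ a) (hab : a ≤ b) :
    b ^ 2 * (exp a - 1 - a) ≤ a ^ 2 * (exp b - 1 - b) := by
  refine hasSum_le (fun n => ?_) ((hasSum_pow_add_two_div_factorial a).mul_left (b ^ 2))
    ((hasSum_pow_add_two_div_factorial b).mul_left (a ^ 2))
  rw [mul_div_assoc', mul_div_assoc']
  gcongr ?_ / _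
  calc b ^ 2 * a ^ (n + 2) = a ^ 2 * b ^ 2 * a ^ n := by ring
    _ ≤ a ^ 2 * b ^ 2 * b ^ n := by gcongr
    _ = a ^ 2 * b ^ (n + 2) := by ring

lemma sq_mul_exp_sub_one_sub_le (hb : 0 ≤ b) (hab : a ≤ b) :
    b ^ 2 * (exp a - 1 - a) ≤ a ^ 2 * (exp b - 1 - b) := by
  rcases le_total a 0 with ha | ha
  · exact sq_mul_exp_sub_one_sub_le_of_nonpos ha hb
  · exact sq_mul_exp_sub_one_sub_le_of_nonneg ha hab

end Real

theorem exp_taylor_bound (x y t : ℝ) (hy : 0 < y) (hxy : x ≤ y) (ht : 0 < t) :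
    Real.exp (t * x) ≤ 1 + t * x + ((Real.exp (t * y) - 1 - t * y) / y ^ 2) * x ^ 2 := by
  have hscaled := sq_mul_exp_sub_one_sub_le (mul_pos ht hy).le (mul_le_mul_of_nonneg_left hxy ht.le)
  have hcleared : y ^ 2 * (exp (t * x) - 1 - t * x) ≤ x ^ 2 * (exp (t * y) - 1 - t * y) := by
    rw [mul_pow, mul_pow, mul_assoc, mul_assoc] at hscaled
    exact le_of_mul_le_mul_left hscaled (by positivity)
  rw [div_mul_eq_mul_div, ← sub_le_iff_le_add', le_div_iff₀ (by positivity)]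
  linarith
end

section
/- For all x, y > 0 and Bₙ > 0, the Bennett exponent satisfies: (Bₙ/(xy) + 1)·ln(1 + xy/Bₙ) ≥ 1 + (xy/(2(xy + Bₙ)))·(1 + (2/3)·ln(1 + xy/Bₙ)), and consequently x/y − (x/y)·(Bₙ/(xy)+1)·ln(1+xy/Bₙ) ≤ −(x²/(2(xy + Bₙ)))·(1 + (2/3)·ln(1 + xy/Bₙ)). -/
/-!
After clearing denominators the first inequality says
`log (1 + t) ≥ 3t(3t + 2) / (2(2t² + 6t + 3))` for `t = xy/B > 0`. This rational function is
dominated by the `[2/2]` Padé approximant `3t(t + 2)/(t² + 6t + 6)` of `log (1 + t)`, which is a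
lower bound because the derivative of the difference is `t⁴/((1 + t)(t² + 6t + 6)²) ≥ 0`.
The second inequality is the first one multiplied by `x / y`.
-/

open Real Set

lemma pade_le_log_one_add {u : ℝ} (hu : 0 ≤ u) :
    3 * u * (u + 2) / (u ^ 2 + 6 * u + 6) ≤ log (1 + u) := by
  let f : ℝ → ℝ := fun v => log (1 + v) - 3 * v * (v + 2) / (v ^ 2 + 6 * v + 6)
  have hderiv : ∀ v ∈ Ici (0 : ℝ),
      HasDerivAt f (v ^ 4 / ((1 + v) * (v ^ 2 + 6 * v + 6) ^ 2)) v := by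
    intro v (hv : 0 ≤ v)
    have hq : v ^ 2 + 6 * v + 6 ≠ 0 := by positivity
    have h := (((hasDerivAt_id' v).const_add 1).log (by positivity)).sub
      ((((hasDerivAt_id' v).const_mul 3).mul ((hasDerivAt_id' v).add_const 2)).div
        ((((hasDerivAt_pow 2 v).add ((hasDerivAt_id' v).const_mul 6)).add_const 6)) hq)
    refine h.congr_deriv ?_
    simp only [Pi.add_apply, Pi.mul_apply]
    field_simp
    ring
  have hmono : MonotoneOn f (Ici 0) :=
    monotoneOn_of_hasDerivWithinAt_nonneg (convex_Ici 0)
      (fun v hv => (hderiv v hv).continuousAt.continuousWithinAt)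
      (fun v hv => (hderiv v (interior_subset hv)).hasDerivWithinAt)
      (fun v hv => by have : 0 ≤ v := interior_subset hv; positivity)
  simpa [f] using hmono self_mem_Ici hu hu

lemma kolmogorov_exponent_le_bennett_exponent {t : ℝ} (ht : 0 < t) :
    1 + t / (2 * (1 + t)) * (1 + 2 / 3 * log (1 + t)) ≤ (1 / t + 1) * log (1 + t) := by
  have hpade : 3 * t * (3 * t + 2) / (2 * (2 * t ^ 2 + 6 * t + 3)) ≤ log (1 + t) := by
    refine le_trans ?_ (pade_le_log_one_add ht.le)
    rw [div_le_div_iff₀ (by positivity) (by positivity)]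
    -- the cross-multiplied difference is `3 t ^ 4`
    nlinarith [pow_pos ht 4]
  rw [div_le_iff₀ (by positivity)] at hpade
  field_simp
  nlinarith

theorem bennett_exponent_bound (x y B : ℝ) (hx : 0 < x) (hy : 0 < y) (hB : 0 < B) :
    (B / (x * y) + 1) * Real.log (1 + x * y / B)
      ≥ 1 + (x * y / (2 * (x * y + B))) * (1 + (2 / 3) * Real.log (1 + x * y / B)) ∧
    x / y - (x / y) * (B / (x * y) + 1) * Real.log (1 + x * y / B)
      ≤ -(x ^ 2 / (2 * (x * y + B))) * (1 + (2 / 3) * Real.log (1 + x * y / B)) := by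
  have ht : 0 < x * y / B := by positivity
  have hmain := kolmogorov_exponent_le_bennett_exponent ht
  have hratio : x * y / B / (2 * (1 + x * y / B)) = x * y / (2 * (x * y + B)) := by
    field_simp
    ring
  rw [one_div_div, hratio] at hmain
  refine ⟨hmain, ?_⟩
  have hscaled := mul_le_mul_of_nonneg_left hmain (div_pos hx hy).le
  have hx2 : x / y * (x * y / (2 * (x * y + B))) = x ^ 2 / (2 * (x * y + B)) := by
    field_simp
  rw [mul_add, mul_one, ← mul_assoc, hx2] at hscaled
  linarith
end
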